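/- Let b = λ + iη with λ, η ∈ ℝ and λ > 0, and let 𝒫̂ₙ(b;x) = (2ⁿ(λ)ₙ/(2λ)ₙ)·𝒫ₙ(b;x) be the monic complementary Romanovski–Routh polynomials. Then for every real x there exists r > 0 such that for all real w with |w| < r, e^{2η·arccot(x)} / ( [(xw − 1)² + w²]^λ · e^{2η·arccot(x − w(x² + 1))} ) = Σ_{n=0}^{∞} (2λ)ₙ · 𝒫̂ₙ(b;x) · wⁿ/n!. -/

import Mathlib

open Real

/-- The continuous `arccot` decreasing from `π` to `0`. -/
noncomputable def arccot (x : ℝ) : ℝ := Real.pi / 2 - Real.arctan x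

/-- Complementary Romanovski–Routh polynomials `𝒫ₙ(b;x)` with `b = λ + iη`,
defined by the three-term recurrence (real version). -/
noncomputable def crr (lam eta : ℝ) : ℕ → ℝ → ℝ
  | 0, _ => 1
  | 1, x => x - eta / lam
  | n + 2, x =>
      (x - eta / (lam + n + 1)) * crr lam eta (n + 1) x -
        ((n + 1) * (2 * lam + n) / (4 * (lam + n) * (lam + n + 1))) *
          (x ^ 2 + 1) * crr lam eta n x

/-- Monic complementary Romanovski–Routh polynomials
`𝒫̂ₙ(b;x) = (2ⁿ(λ)ₙ/(2λ)ₙ)·𝒫ₙ(b;x)`. -/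
noncomputable def crrMonic (lam eta : ℝ) (n : ℕ) (x : ℝ) : ℝ :=
  (2 ^ n * Polynomial.eval lam (ascPochhammer ℝ n) /
      Polynomial.eval (2 * lam) (ascPochhammer ℝ n)) * crr lam eta n x

/-!
The left-hand side is `(1 - (x + i) w) ^ (-b) * (1 - (x - i) w) ^ (-b̄)`: the two bases are
complex conjugates whose argument is `arccot x - arccot (x - w (x² + 1))`, so the product is
`|(1 - (x + i) w) ^ (-b)|²`. Each factor is a binomial series, and their product
`F = (1 - uX) ^ (-b) (1 - vX) ^ (-b')` satisfies the first-order equation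
`(1 - uX) (1 - vX) F' = (b u (1 - vX) + b' v (1 - uX)) F`. Comparing coefficients gives a
three-term recurrence which, for `u, v = x ± i` and `b, b' = λ ± iη`, is the recurrence of
`2ⁿ (λ)ₙ 𝒫ₙ(b;x) / n!` with the same initial terms.
-/

open Complex ComplexConjugate PowerSeries
open scoped Nat

theorem Ring.choose_add_sub_one_eq_ascPochhammer_div {K : Type*} [Field K] [CharZero K] (b : K)
    (n : ℕ) :
    Ring.choose (b + n - 1) n = (ascPochhammer K n).eval b / n ! := by
  rw [← Ring.multichoose_eq, eq_div_iff (mod_cast n.factorial_ne_zero), mul_comm,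
    ← nsmul_eq_mul, Ring.factorial_nsmul_multichoose_eq_ascPochhammer,
    Polynomial.ascPochhammer_smeval_eq_eval]

open Finset in
theorem PowerSeries.hasSum_coeff_mul_mul_pow {R : Type*} [NormedCommRing R] {A B : R⟦X⟧}
    {w s t : R} (hA : HasSum (fun n => coeff n A * w ^ n) s)
    (hA' : Summable fun n => ‖coeff n A * w ^ n‖) (hB : HasSum (fun n => coeff n B * w ^ n) t)
    (hB' : Summable fun n => ‖coeff n B * w ^ n‖) :
    HasSum (fun n => coeff n (A * B) * w ^ n) (s * t) := by
  have hterm : ∀ n, coeff n (A * B) * w ^ n =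
      ∑ kl ∈ antidiagonal n, coeff kl.1 A * w ^ kl.1 * (coeff kl.2 B * w ^ kl.2) := by
    intro n
    rw [coeff_mul, sum_mul]
    refine sum_congr rfl fun kl hkl => ?_
    rw [← mem_antidiagonal.1 hkl, pow_add]
    ring
  simp_rw [hterm]
  rw [← hA.tsum_eq, ← hB.tsum_eq,
    tsum_mul_tsum_eq_tsum_sum_antidiagonal_of_summable_norm' hA' hA.summable hB' hB.summable]
  exact (summable_sum_mul_antidiagonal_of_summable_norm' hA' hA.summable hB' hB.summable).hasSum

theorem Complex.arg_eq_arctan_of_re_pos {z : ℂ} (hz : 0 < z.re) :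
    arg z = Real.arctan (z.im / z.re) := by
  have h := abs_lt.1 (abs_arg_lt_pi_div_two_iff.2 (Or.inl hz))
  rw [← tan_arg, Real.arctan_tan h.1 h.2]

theorem Complex.cpow_mul_conj_cpow_conj {z : ℂ} (hz : z.arg ≠ π) (c : ℂ) :
    z ^ c * conj z ^ conj c = ((‖z ^ c‖ ^ 2 : ℝ) : ℂ) := by
  rw [conj_cpow z _ hz, conj_conj, mul_conj', ofReal_pow]

noncomputable def negBinomialSeries (b u : ℂ) : ℂ⟦X⟧ :=
  PowerSeries.mk fun n => (ascPochhammer ℂ n).eval b / n ! * u ^ n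

theorem hasSum_and_summable_norm_negBinomialSeries (b : ℂ) {u w : ℂ} (h : ‖u * w‖ < 1) :
    HasSum (fun n => coeff n (negBinomialSeries b u) * w ^ n) ((1 - u * w) ^ (-b)) ∧
      Summable fun n => ‖coeff n (negBinomialSeries b u) * w ^ n‖ := by
  have hp := one_div_one_sub_cpow_hasFPowerSeriesOnBall_zero b
  have hmem : u * w ∈ Metric.eball (0 : ℂ) 1 := by
    rw [Metric.mem_eball, edist_zero_right, ← ofReal_norm, ← ENNReal.ofReal_one]
    exact ENNReal.ofReal_lt_ofReal_iff'.2 ⟨h, one_pos⟩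
  have hterm : ∀ n, (FormalMultilinearSeries.ofScalars ℂ fun n ↦ Ring.choose (b + n - 1) n) n
      (fun _ => u * w) = coeff n (negBinomialSeries b u) * w ^ n := by
    intro n
    rw [FormalMultilinearSeries.ofScalars_apply_eq, Ring.choose_add_sub_one_eq_ascPochhammer_div,
      negBinomialSeries, coeff_mk, smul_eq_mul, mul_pow, mul_assoc]
  constructor
  · simpa [hterm, cpow_neg] using hp.hasSum hmem
  · simpa [hterm] using
      FormalMultilinearSeries.summable_norm_apply _ (Metric.eball_subset_eball hp.r_le hmem)

theorem coeff_negBinomialSeries_succ (b u : ℂ) (n : ℕ) :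
    coeff (n + 1) (negBinomialSeries b u) * (n + 1) =
      (b + n) * u * coeff n (negBinomialSeries b u) := by
  simp only [negBinomialSeries, coeff_mk, ascPochhammer_succ_eval, Nat.factorial_succ,
    Nat.cast_mul, pow_succ]
  field_simp
  push_cast
  ring

theorem negBinomialSeries_ode (b u : ℂ) :
    (1 - C u * X) * d⁄dX ℂ (negBinomialSeries b u) = C (b * u) * negBinomialSeries b u := by
  rw [sub_mul, one_mul, mul_assoc, ← smul_eq_C_mul, ← smul_eq_C_mul]
  ext (_ | n) <;>
  simp only [map_sub, coeff_smul, coeff_zero_X_mul, coeff_succ_X_mul, coeff_derivative,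
    smul_eq_mul]
  · linear_combination coeff_negBinomialSeries_succ b u 0
  · have := coeff_negBinomialSeries_succ b u (n + 1)
    push_cast at this ⊢
    linear_combination this

theorem coeff_negBinomialSeries_mul_succ_succ (b b' u v : ℂ) (n : ℕ) :
    (n + 2) * coeff (n + 2) (negBinomialSeries b u * negBinomialSeries b' v) =
      (b * u + b' * v + (n + 1) * (u + v)) *
          coeff (n + 1) (negBinomialSeries b u * negBinomialSeries b' v)
        - u * v * (b + b' + n) * coeff n (negBinomialSeries b u * negBinomialSeries b' v) := by
  set A := negBinomialSeries b u
  set B := negBinomialSeries b' v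
  have hode : d⁄dX ℂ (A * B) - (u + v) • (X * d⁄dX ℂ (A * B))
        + (u * v) • (X * (X * d⁄dX ℂ (A * B)))
      = (b * u + b' * v) • (A * B) - (u * v * (b + b')) • (X * (A * B)) := by
    have hA := negBinomialSeries_ode b u
    have hB := negBinomialSeries_ode b' v
    simp only [smul_eq_C_mul, map_add, map_mul, Derivation.leibniz, smul_eq_mul] at hA hB ⊢
    linear_combination (1 - C v * X) * B * hA + (1 - C u * X) * A * hB
  have := congrArg (coeff (n + 1)) hode
  simp only [map_sub, map_add, coeff_smul, coeff_succ_X_mul, coeff_derivative, smul_eq_mul] at this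
  rcases n with _ | n <;>
  simp only [coeff_zero_X_mul, coeff_succ_X_mul, coeff_derivative] at this <;>
  push_cast at this ⊢ <;>
  linear_combination this

noncomputable def crrCoeff (lam eta x : ℝ) (n : ℕ) : ℝ :=
  2 ^ n * (ascPochhammer ℝ n).eval lam * crr lam eta n x / n !

theorem crrCoeff_zero (lam eta x : ℝ) : crrCoeff lam eta x 0 = 1 := by simp [crrCoeff, crr]

theorem crrCoeff_one {lam : ℝ} (hlam : lam ≠ 0) (eta x : ℝ) :
    crrCoeff lam eta x 1 = 2 * lam * x - 2 * eta := by
  simp only [crrCoeff, crr, ascPochhammer_one, Polynomial.eval_X, Nat.factorial_one]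
  field_simp
  ring

theorem crrCoeff_succ_succ {lam : ℝ} (hlam : 0 < lam) (eta x : ℝ) (n : ℕ) :
    (n + 2) * crrCoeff lam eta x (n + 2) =
      (2 * lam * x - 2 * eta + 2 * (n + 1) * x) * crrCoeff lam eta x (n + 1)
        - (x ^ 2 + 1) * (2 * lam + n) * crrCoeff lam eta x n := by
  have h1 : lam + n ≠ 0 := by positivity
  have h2 : lam + n + 1 ≠ 0 := by positivity
  simp only [crrCoeff, crr, ascPochhammer_succ_eval, Nat.factorial_succ, Nat.cast_mul,
    pow_succ]
  field_simp
  push_cast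
  ring

theorem coeff_negBinomialSeries_mul_eq_crrCoeff {lam : ℝ} (hlam : 0 < lam) (eta x : ℝ)
    (n : ℕ) :
    coeff n (negBinomialSeries (lam + eta * I) (x + I) * negBinomialSeries (lam - eta * I) (x - I))
      = crrCoeff lam eta x n := by
  induction n using Nat.twoStepInduction with
  | zero => simp [negBinomialSeries, crrCoeff_zero]
  | one =>
    simp only [negBinomialSeries, coeff_mul, coeff_mk, Finset.Nat.sum_antidiagonal_succ,
      Finset.HasAntidiagonal.antidiagonal_zero, Finset.sum_singleton, ascPochhammer_zero,
      ascPochhammer_one, Polynomial.eval_one, Polynomial.eval_X, Nat.factorial_zero,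
      Nat.factorial_one, Nat.cast_one, div_one, pow_zero, pow_one, mul_one, one_mul, zero_add,
      crrCoeff_one hlam.ne', ofReal_sub, ofReal_mul, ofReal_ofNat]
    linear_combination 2 * eta * I_sq
  | more n ih₀ ih₁ =>
    have hrec :=
      coeff_negBinomialSeries_mul_succ_succ (lam + eta * I) (lam - eta * I) (x + I) (x - I) n
    have hreal := congrArg ofReal (crrCoeff_succ_succ hlam eta x n)
    rw [ih₀, ih₁] at hrec
    push_cast at hreal
    apply mul_left_cancel₀ (show (n + 2 : ℂ) ≠ 0 by norm_cast)
    rw [hrec]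
    linear_combination -hreal + ((2 * lam + n) * (crrCoeff lam eta x n : ℂ)
      + 2 * eta * (crrCoeff lam eta x (n + 1) : ℂ)) * I_sq

theorem eval_ascPochhammer_mul_crrMonic {lam : ℝ} (hlam : 0 < lam) (eta : ℝ) (n : ℕ)
    (x : ℝ) :
    (ascPochhammer ℝ n).eval (2 * lam) * crrMonic lam eta n x = n ! * crrCoeff lam eta x n := by
  have : (ascPochhammer ℝ n).eval (2 * lam) ≠ 0 := (ascPochhammer_pos n _ (by positivity)).ne'
  simp only [crrMonic, crrCoeff]
  field_simp

theorem arg_one_sub_mul_add_I {x w : ℝ} (h : 0 < 1 - x * w) :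
    arg (1 - (x + I) * w) = arccot x - arccot (x - w * (x ^ 2 + 1)) := by
  have hx : (x - w * (x ^ 2 + 1)) * -x < 1 := by nlinarith [sq_nonneg x]
  have hden : 1 - (x - w * (x ^ 2 + 1)) * -x = (1 + x ^ 2) * (1 - x * w) := by ring
  have hz : (1 - (x + I) * w).im / (1 - (x + I) * w).re = -w / (1 - x * w) := by simp
  rw [arg_eq_arctan_of_re_pos (by simpa using h), hz, arccot, arccot, sub_sub_sub_cancel_left,
    sub_eq_add_neg (Real.arctan _), ← Real.arctan_neg, Real.arctan_add hx, hden]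
  congr 1
  field_simp
  ring

theorem one_sub_cpow_mul_one_sub_cpow_eq_exp_arccot {lam eta x w : ℝ} (h : 0 < 1 - x * w) :
    (1 - (x + I) * w) ^ (-(lam + eta * I)) * (1 - (x - I) * w) ^ (-(lam - eta * I)) =
      ((Real.exp (2 * eta * arccot x) /
        (((x * w - 1) ^ 2 + w ^ 2) ^ lam * Real.exp (2 * eta * arccot (x - w * (x ^ 2 + 1)))) :
          ℝ) : ℂ) := by
  set z : ℂ := 1 - (x + I) * w
  have hre : 0 < z.re := by simpa [z] using h
  have hz : z ≠ 0 := fun h0 => by simp [h0] at hre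
  have hconj : 1 - (x - I) * w = conj z := by simp [z, sub_eq_add_neg]
  have hnorm : ‖z‖ ^ 2 = (x * w - 1) ^ 2 + w ^ 2 := by
    rw [Complex.sq_norm, normSq_apply]
    simp only [z, sub_re, sub_im, mul_re, mul_im, add_re, add_im, ofReal_re, ofReal_im, I_re, I_im,
      one_re, one_im]
    ring
  rw [hconj, show -((lam : ℂ) - eta * I) = conj (-(lam + eta * I)) by
    simp only [map_neg, map_add, map_mul, conj_ofReal, conj_I]; ring,
    cpow_mul_conj_cpow_conj (fun h' => by linarith [(arg_eq_pi_iff.1 h').1]),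
    norm_cpow_of_ne_zero hz, ← hnorm, arg_one_sub_mul_add_I h]
  congr 1
  have hpos : 0 < ‖z‖ := norm_pos_iff.2 hz
  simp only [neg_re, add_re, ofReal_re, mul_re, I_re, ofReal_im, I_im, neg_im, add_im, mul_im]
  rw [rpow_def_of_pos hpos, rpow_def_of_pos (by positivity), Real.log_pow, div_pow,
    ← Real.exp_nat_mul, ← Real.exp_nat_mul, ← Real.exp_add, ← Real.exp_sub,
    ← Real.exp_sub]
  congr 1
  push_cast
  ring

theorem stmt12 (lam eta : ℝ) (hlam : 0 < lam) (x : ℝ) :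
    ∃ r > 0, ∀ w : ℝ, |w| < r →
      HasSum
        (fun n : ℕ =>
          Polynomial.eval (2 * lam) (ascPochhammer ℝ n) * crrMonic lam eta n x *
            w ^ n / Nat.factorial n)
        (Real.exp (2 * eta * arccot x) /
          (((x * w - 1) ^ 2 + w ^ 2) ^ lam *
            Real.exp (2 * eta * arccot (x - w * (x ^ 2 + 1))))) := by
  have hxI : 0 < ‖(x : ℂ) + I‖ := norm_pos_iff.2 fun h => by simpa using congrArg im h
  refine ⟨‖(x : ℂ) + I‖⁻¹, inv_pos.2 hxI, fun w hw => ?_⟩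
  have hu : ‖(x + I) * (w : ℂ)‖ < 1 := by
    rwa [norm_mul, norm_real, norm_eq_abs, ← lt_div_iff₀' hxI, one_div]
  have hv : ‖(x - I) * (w : ℂ)‖ < 1 := by
    rwa [← norm_conj, map_mul, conj_ofReal, map_sub, conj_ofReal, conj_I, sub_neg_eq_add]
  have hre : 0 < 1 - x * w := by
    have := re_le_norm ((x + I) * (w : ℂ))
    simp only [mul_re, add_re, ofReal_re, I_re, add_im, ofReal_im, I_im] at this
    linarith
  obtain ⟨hA, hA'⟩ := hasSum_and_summable_norm_negBinomialSeries (lam + eta * I) hu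
  obtain ⟨hB, hB'⟩ := hasSum_and_summable_norm_negBinomialSeries (lam - eta * I) hv
  have hsum := hasSum_coeff_mul_mul_pow hA hA' hB hB'
  simp_rw [coeff_negBinomialSeries_mul_eq_crrCoeff hlam,
    one_sub_cpow_mul_one_sub_cpow_eq_exp_arccot hre] at hsum
  convert hasSum_ofReal.1 (by exact_mod_cast hsum) using 2 with n
  rw [eval_ascPochhammer_mul_crrMonic hlam]
  field_simp
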